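/- Let d ≥ 1, n ≥ 2d−1, and let p be a real-valued function on all strings of length at most n over Σ. Let 1 ≤ d* ≤ d and let v_1,…,v_{d*}, w_1,…,w_{d*} ∈ Σ* be strings of length at most d−1 such that V := [p(w_j v_i)]_{1≤i,j≤d*} ∈ ℝ^{d*×d*} is invertible, and assume that for every w ∈ Σ* with |w| ≤ ⌈n/2⌉ there exist coefficients c_1,…,c_{d*} ∈ ℝ with p(wu) = Σ_{j=1}^{d*} c_j p(w_j u) for every u ∈ Σ* such that |wu| ≤ n and |w_j u| ≤ n for all j. Define W_a := [p(w_j a v_i)]_{1≤i,j≤d*} and T_a := W_a V^{−1} for each a ∈ Σ. Then for all v, w ∈ Σ* with |wv| ≤ ⌈n/2⌉, writing T_v := T_{a_k}···T_{a_1} for v = a_1…a_k, one has T_v (p(w v_1),…,p(w v_{d*}))ᵀ = (p(wv v_1),…,p(wv v_{d*}))ᵀ. -/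

import Mathlib

/-!
Writing `x_w = (p(w v₁), …, p(w v_{d*}))ᵀ`, the dependence hypothesis says `x_w = V c` and
`x_{wa} = W_a c` for one and the same coefficient vector `c`, because `|w a vᵢ|` and
`|wⱼ a vᵢ|` stay within `n`. Hence `T_a x_w = W_a V⁻¹ V c = x_{wa}`, and induction on the
last letter of `v` gives `T_v x_w = x_{wv}`.
-/

open Matrix

/-- For `v = a₁…a_k`, the product `T_{a_k} ⋯ T_{a₁}` (with `T_□ = Id`). -/
def wordProd {A R : Type*} [Semiring R] {d : ℕ}
    (T : A → Matrix (Fin d) (Fin d) R) (v : List A) : Matrix (Fin d) (Fin d) R :=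
  (v.reverse.map T).prod

section wordProd

variable {A R : Type*} [Semiring R] {d : ℕ} (T : A → Matrix (Fin d) (Fin d) R)

@[simp]
theorem wordProd_nil : wordProd T [] = 1 := rfl

theorem wordProd_append_singleton (v : List A) (a : A) :
    wordProd T (v ++ [a]) = T a * wordProd T v := by
  simp [wordProd]

theorem wordProd_mulVec_eq {m : ℕ} (f : List A → Fin d → R)
    (hstep : ∀ a w, w.length + 1 ≤ m → T a *ᵥ f w = f (w ++ [a])) :
    ∀ v w, (w ++ v).length ≤ m → wordProd T v *ᵥ f w = f (w ++ v) := by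
  intro v
  induction v using List.reverseRecOn with
  | nil => simp
  | append_singleton v a ih =>
    intro w hw
    rw [wordProd_append_singleton, ← mulVec_mulVec, ih w (by grind [List.length_append]),
      hstep a _ (by grind [List.length_append]), List.append_assoc]

end wordProd

theorem Matrix.mul_inv_mulVec_mulVec {n R : Type*} [Fintype n] [DecidableEq n] [CommRing R]
    {V : Matrix n n R} (hV : IsUnit V.det) (W : Matrix n n R) (c : n → R) :
    (W * V⁻¹) *ᵥ (V *ᵥ c) = W *ᵥ c := by
  rw [mulVec_mulVec, Matrix.nonsing_inv_mul_cancel_right V W hV]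

theorem of_mulVec_eq_of_eq_sum {A ι R : Type*} [Fintype ι] [CommSemiring R] (p : List A → R)
    (ws u : ι → List A) (w : List A) (c : ι → R)
    (hc : ∀ i, p (w ++ u i) = ∑ j, c j * p (ws j ++ u i)) :
    (of fun i j => p (ws j ++ u i)) *ᵥ c = fun i => p (w ++ u i) := by
  funext i
  simp [hc, mulVec, dotProduct, mul_comm]

theorem stmt19_general {A : Type*} (d n dstar : ℕ)
    (hn : 2 * d - 1 ≤ n)
    (p : List A → ℝ)
    (vs ws : Fin dstar → List A)
    (hvs : ∀ i, (vs i).length ≤ d - 1) (hws : ∀ j, (ws j).length ≤ d - 1)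
    (V : Matrix (Fin dstar) (Fin dstar) ℝ)
    (hV : V = Matrix.of fun i j => p (ws j ++ vs i))
    (hVunit : IsUnit V.det)
    (hdep : ∀ w : List A, w.length ≤ (n + 1) / 2 →
      ∃ c : Fin dstar → ℝ, ∀ u : List A, (w ++ u).length ≤ n →
        (∀ j, (ws j ++ u).length ≤ n) → p (w ++ u) = ∑ j, c j * p (ws j ++ u))
    (W : A → Matrix (Fin dstar) (Fin dstar) ℝ)
    (hW : ∀ a : A, W a = Matrix.of fun i j => p (ws j ++ [a] ++ vs i))
    (T : A → Matrix (Fin dstar) (Fin dstar) ℝ)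
    (hT : ∀ a : A, T a = W a * V⁻¹) :
    ∀ v w : List A, (w ++ v).length ≤ (n + 1) / 2 →
      (wordProd T v) *ᵥ (fun i => p (w ++ vs i)) =
        fun i => p (w ++ v ++ vs i) := by
  refine wordProd_mulVec_eq T (fun w i => p (w ++ vs i)) fun a w hw => ?_
  obtain ⟨c, hc⟩ := hdep w (by omega)
  have hcV : ∀ i, p (w ++ vs i) = ∑ j, c j * p (ws j ++ vs i) := fun i =>
    hc _ (by grind [List.length_append]) fun j => by grind [List.length_append]
  have hcW : ∀ i, p (w ++ ([a] ++ vs i)) = ∑ j, c j * p (ws j ++ ([a] ++ vs i)) := fun i =>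
    hc _ (by grind [List.length_append]) fun j => by grind [List.length_append]
  have hxV := of_mulVec_eq_of_eq_sum p ws vs w c hcV
  have hxW := of_mulVec_eq_of_eq_sum p ws (fun i => [a] ++ vs i) w c hcW
  simp only [← List.append_assoc, ← hV, ← hW] at hxV hxW
  rw [hT, ← hxV, mul_inv_mulVec_mulVec hVunit, hxW]

/-- **Lemma 1 for Theorem on generators.** Let `d ≥ 1`, `n ≥ 2d−1`,
`1 ≤ d* ≤ d`, and let `v₁,…,v_{d*}, w₁,…,w_{d*}` be strings of length `≤ d−1` such that
`V = [p(wⱼ vᵢ)]` is invertible; assume each column `p(w·)` with `|w| ≤ ⌈n/2⌉` is (on the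
relevant entries) a linear combination of the columns `p(wⱼ·)`. With
`W_a = [p(wⱼ a vᵢ)]` and `T_a = W_a V⁻¹`: for all `v, w` with `|wv| ≤ ⌈n/2⌉`,
`T_v (p(w v₁),…,p(w v_{d*}))ᵀ = (p(wv v₁),…,p(wv v_{d*}))ᵀ`. -/
theorem stmt19 {A : Type*} [Fintype A] [Nonempty A] (d n dstar : ℕ)
    (hd : 1 ≤ d) (hn : 2 * d - 1 ≤ n) (hds : 1 ≤ dstar) (hdsd : dstar ≤ d)
    (p : List A → ℝ)
    (vs ws : Fin dstar → List A)
    (hvs : ∀ i, (vs i).length ≤ d - 1) (hws : ∀ j, (ws j).length ≤ d - 1)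
    (V : Matrix (Fin dstar) (Fin dstar) ℝ)
    (hV : V = Matrix.of fun i j => p (ws j ++ vs i))
    (hVunit : IsUnit V.det)
    (hdep : ∀ w : List A, w.length ≤ (n + 1) / 2 →
      ∃ c : Fin dstar → ℝ, ∀ u : List A, (w ++ u).length ≤ n →
        (∀ j, (ws j ++ u).length ≤ n) → p (w ++ u) = ∑ j, c j * p (ws j ++ u))
    (W : A → Matrix (Fin dstar) (Fin dstar) ℝ)
    (hW : ∀ a : A, W a = Matrix.of fun i j => p (ws j ++ [a] ++ vs i))
    (T : A → Matrix (Fin dstar) (Fin dstar) ℝ)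
    (hT : ∀ a : A, T a = W a * V⁻¹) :
    ∀ v w : List A, (w ++ v).length ≤ (n + 1) / 2 →
      (wordProd T v) *ᵥ (fun i => p (w ++ vs i)) =
        fun i => p (w ++ v ++ vs i) :=
  stmt19_general d n dstar hn p vs ws hvs hws V hV hVunit hdep W hW T hT
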